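/- Let n ≥ 2 be an integer, set ε = 1/n^{100}, and let t be any real number. Let u_a, u_b, u_c be unit vectors in ℝⁿ with ‖u_a + u_b + u_c‖² ≤ 18ε, and let g = (g₁, …, g_n) be a random vector whose coordinates are independent standard Gaussians N(0,1). Then P[⟨u_a, g⟩ ≥ t and ⟨u_b, g⟩ ≥ t] ≤ Φ̄(2t) + 2/n^{25}, where Φ̄(s) = P_{h∼N(0,1)}[h ≥ s] is the standard Gaussian upper tail. -/

import Mathlib

open scoped BigOperators

/-- The standard Gaussian upper tail `Φ̄(t) = P_{g ∼ N(0,1)}[g ≥ t]`. -/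
noncomputable def gaussTail (t : ℝ) : ℝ :=
  ((ProbabilityTheory.gaussianReal 0 1) (Set.Ici t)).toReal

/-!
Since both events force `⟨u_a + u_b, g⟩ ≥ 2t`, the probability is at most `P[N(0, σ²) ≥ 2t]`
with `σ = ‖u_a + u_b‖`, which equals `Φ̄(2t/σ)`. Because `u_c` is a unit vector,
`|σ - 1| ≤ ‖u_a + u_b + u_c‖ ≤ √(18ε) ≤ 2/n²⁵`. Rescaling the threshold by `σ` moves the tail by
at most the Gaussian mass of an interval between `2t/σ` and `2t`, which is at most `|σ - 1|`
because `|x| φ(x) ≤ 1/2`.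
-/

open MeasureTheory ProbabilityTheory Real Set
open scoped ENNReal NNReal RealInnerProductSpace

lemma norm_toLp_two_eq_sqrt {ι : Type*} [Fintype ι] (v : ι → ℝ) :
    ‖WithLp.toLp 2 v‖ = √(∑ i, v i ^ 2) := by
  simp [EuclideanSpace.norm_eq, sq_abs]

lemma stdGaussian_map_inner {E : Type*} [NormedAddCommGroup E] [InnerProductSpace ℝ E]
    [FiniteDimensional ℝ E] [MeasurableSpace E] [BorelSpace E] (w : E) :
    (stdGaussian E).map (fun x ↦ ⟪w, x⟫) = gaussianReal 0 (‖w‖₊ ^ 2) := by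
  have h := IsGaussian.map_eq_gaussianReal (μ := stdGaussian E) (innerSL ℝ w)
  rw [integral_strongDual_stdGaussian, variance_dual_stdGaussian, innerSL_apply_norm,
    ← coe_nnnorm, ← NNReal.coe_pow, Real.toNNReal_coe] at h
  exact h

lemma map_pi_gaussianReal_sum_mul {ι : Type*} [Fintype ι] (w : ι → ℝ) :
    (Measure.pi fun _ : ι ↦ gaussianReal 0 1).map (fun g ↦ ∑ i, w i * g i) =
      gaussianReal 0 (‖WithLp.toLp 2 w‖₊ ^ 2) := by
  rw [← stdGaussian_map_inner, ← map_pi_eq_stdGaussian,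
    Measure.map_map (by fun_prop) (by fun_prop)]
  congr 1
  ext g
  simp [PiLp.inner_apply, mul_comm]

lemma gaussianReal_sq_apply_Ici {σ : ℝ≥0} (hσ : σ ≠ 0) (s : ℝ) :
    gaussianReal 0 (σ ^ 2) (Ici s) = gaussianReal 0 1 (Ici (s / σ)) := by
  have hmap : (gaussianReal 0 1).map ((σ : ℝ) * ·) = gaussianReal 0 (σ ^ 2) := by
    rw [gaussianReal_map_const_mul]
    congr 1
    · simp
    · ext; simp
  have hσ' : (0 : ℝ) < σ := by positivity
  rw [← hmap, Measure.map_apply (by fun_prop) measurableSet_Ici]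
  congr 1
  ext x
  simp [div_le_iff₀' hσ']

lemma gaussianPDFReal_zero_one (x : ℝ) :
    gaussianPDFReal 0 1 x = (√(2 * π))⁻¹ * exp (-(x ^ 2 / 2)) := by
  simp [gaussianPDFReal, neg_div]

lemma gaussianPDFReal_zero_one_le_of_abs_le {x y : ℝ} (h : |x| ≤ |y|) :
    gaussianPDFReal 0 1 y ≤ gaussianPDFReal 0 1 x := by
  rw [gaussianPDFReal_zero_one, gaussianPDFReal_zero_one]
  gcongr _ * exp (-(?_ / 2))
  exact sq_le_sq.2 h

lemma abs_mul_gaussianPDFReal_zero_one_le (x : ℝ) : |x| * gaussianPDFReal 0 1 x ≤ 1 / 2 := by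
  have hx : |x| ≤ exp (x ^ 2 / 2) := by
    nlinarith [add_one_le_exp (x ^ 2 / 2), sq_abs x, sq_nonneg (|x| - 1)]
  have hπ : 2 ≤ √(2 * π) := (le_sqrt zero_le_two (by positivity)).2 (by nlinarith [pi_gt_three])
  calc |x| * gaussianPDFReal 0 1 x = (√(2 * π))⁻¹ * (|x| / exp (x ^ 2 / 2)) := by
        rw [gaussianPDFReal_zero_one, exp_neg]; ring
    _ ≤ 2⁻¹ * 1 := by
        gcongr
        exact (div_le_one (exp_pos _)).2 hx
    _ = 1 / 2 := by norm_num

lemma gaussianReal_Ico_le {a b c : ℝ} (hc : ∀ x ∈ Ico a b, |c| ≤ |x|) :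
    gaussianReal 0 1 (Ico a b) ≤ ENNReal.ofReal (gaussianPDFReal 0 1 c * (b - a)) := by
  calc gaussianReal 0 1 (Ico a b) = ∫⁻ x in Ico a b, gaussianPDF 0 1 x :=
        gaussianReal_apply 0 one_ne_zero _
    _ ≤ ∫⁻ _ in Ico a b, ENNReal.ofReal (gaussianPDFReal 0 1 c) :=
        setLIntegral_mono measurable_const fun x hx ↦
          ENNReal.ofReal_le_ofReal (gaussianPDFReal_zero_one_le_of_abs_le (hc x hx))
    _ = ENNReal.ofReal (gaussianPDFReal 0 1 c * (b - a)) := by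
        rw [setLIntegral_const, Real.volume_Ico,
          ← ENNReal.ofReal_mul (gaussianPDFReal_nonneg _ _ _)]

lemma exists_abs_le_of_div_lt {s σ : ℝ} (hσ : 1 / 2 ≤ σ) (h : s / σ < s) :
    ∃ c, (∀ x ∈ Ico (s / σ) s, |c| ≤ |x|) ∧ s - s / σ ≤ 2 * |c| * |σ - 1| := by
  have hσ0 : 0 < σ := by linarith
  rcases lt_or_ge 0 s with hs | hs
  · have hc : 0 < s / σ := div_pos hs hσ0
    refine ⟨s / σ, fun x hx ↦ ?_, ?_⟩
    · rw [abs_of_pos hc, abs_of_pos (hc.trans_le hx.1)]; exact hx.1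
    · have : s - s / σ = s / σ * (σ - 1) := by field_simp
      rw [this, abs_of_pos hc]
      nlinarith [le_abs_self (σ - 1), abs_nonneg (σ - 1)]
  · refine ⟨s, fun x hx ↦ ?_, ?_⟩
    · rw [abs_of_nonpos hs, abs_of_neg (hx.2.trans_le hs)]; linarith [hx.2]
    · have : s - s / σ = -s * (1 - σ) / σ := by field_simp; ring
      rw [this, abs_of_nonpos hs, div_le_iff₀ hσ0]
      have h1 : -s * (1 - σ) ≤ -s * |σ - 1| := by
        gcongr
        · linarith
        · linarith [neg_abs_le (σ - 1)]
      nlinarith [mul_nonneg (mul_nonneg (neg_nonneg.2 hs) (abs_nonneg (σ - 1)))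
        (by linarith : 0 ≤ 2 * σ - 1)]

lemma gaussianReal_Ici_div_le {σ : ℝ} (hσ : 1 / 2 ≤ σ) (s : ℝ) :
    gaussianReal 0 1 (Ici (s / σ)) ≤ gaussianReal 0 1 (Ici s) + ENNReal.ofReal |σ - 1| := by
  rcases le_or_gt s (s / σ) with h | h
  · exact (measure_mono (Ici_subset_Ici.2 h)).trans le_self_add
  obtain ⟨c, hc, hlen⟩ := exists_abs_le_of_div_lt hσ h
  have hmass : gaussianPDFReal 0 1 c * (s - s / σ) ≤ |σ - 1| :=
    calc gaussianPDFReal 0 1 c * (s - s / σ)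
        ≤ gaussianPDFReal 0 1 c * (2 * |c| * |σ - 1|) := by
          gcongr; exact gaussianPDFReal_nonneg _ _ _
      _ = 2 * (|c| * gaussianPDFReal 0 1 c) * |σ - 1| := by ring
      _ ≤ 2 * (1 / 2) * |σ - 1| := by gcongr; exact abs_mul_gaussianPDFReal_zero_one_le c
      _ = |σ - 1| := by ring
  calc gaussianReal 0 1 (Ici (s / σ))
      = gaussianReal 0 1 (Ico (s / σ) s) + gaussianReal 0 1 (Ici s) := by
        rw [← Ico_union_Ici_eq_Ici h.le, measure_union
          ((Iio_disjoint_Ici le_rfl).mono_left Ico_subset_Iio_self) measurableSet_Ici]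
    _ ≤ ENNReal.ofReal |σ - 1| + gaussianReal 0 1 (Ici s) := by
        gcongr
        exact (gaussianReal_Ico_le hc).trans (ENNReal.ofReal_le_ofReal hmass)
    _ = gaussianReal 0 1 (Ici s) + ENNReal.ofReal |σ - 1| := add_comm _ _

lemma sqrt_eighteen_div_pow_le {x : ℝ} (hx : 2 ≤ x) : √(18 * (1 / x ^ 100)) ≤ 2 / x ^ 25 := by
  have hx50 : 2 ^ 50 ≤ x ^ 50 := pow_le_pow_left₀ zero_le_two hx 50
  rw [sqrt_le_left (by positivity), div_pow, ← pow_mul, mul_one_div,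
    div_le_div_iff₀ (by positivity) (by positivity), show x ^ 100 = x ^ 50 * x ^ 50 by ring]
  norm_num
  nlinarith

theorem gaussian_correlation_bound_general
    (n : ℕ) (hn : 2 ≤ n) (ε : ℝ) (hε : ε = 1 / (n : ℝ) ^ 100) (t : ℝ)
    (ua ub uc : Fin n → ℝ)
    (huc : ∑ i, uc i ^ 2 = 1)
    (hbal : ∑ i, (ua i + ub i + uc i) ^ 2 ≤ 18 * ε) :
    (MeasureTheory.Measure.pi fun _ : Fin n => ProbabilityTheory.gaussianReal 0 1)
        {g : Fin n → ℝ | t ≤ ∑ i, ua i * g i ∧ t ≤ ∑ i, ub i * g i} ≤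
      ENNReal.ofReal (gaussTail (2 * t) + 2 / (n : ℝ) ^ 25) := by
  set w := WithLp.toLp 2 (fun i ↦ ua i + ub i)
  have hn' : (2 : ℝ) ≤ n := by exact_mod_cast hn
  have hdev : |‖w‖ - 1| ≤ 2 / (n : ℝ) ^ 25 :=
    calc |‖w‖ - 1| = |‖w‖ - ‖WithLp.toLp 2 (-uc)‖| := by
          simp [norm_toLp_two_eq_sqrt, huc]
      _ ≤ ‖w - WithLp.toLp 2 (-uc)‖ := abs_norm_sub_norm_le _ _
      _ = √(∑ i, (ua i + ub i + uc i) ^ 2) := by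
          rw [← WithLp.toLp_sub, norm_toLp_two_eq_sqrt]; simp
      _ ≤ √(18 * ε) := sqrt_le_sqrt hbal
      _ ≤ 2 / (n : ℝ) ^ 25 := hε ▸ sqrt_eighteen_div_pow_le hn'
  have hσ : 1 / 2 ≤ ‖w‖ := by
    have : 2 / (n : ℝ) ^ 25 ≤ 1 / 2 := by
      rw [div_le_div_iff₀ (by positivity) two_pos]
      nlinarith [pow_le_pow_left₀ zero_le_two hn' 25]
    linarith [neg_abs_le (‖w‖ - 1)]
  calc _ ≤ (Measure.pi fun _ : Fin n ↦ gaussianReal 0 1)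
          {g : Fin n → ℝ | 2 * t ≤ ∑ i, (ua i + ub i) * g i} := by
        refine measure_mono fun g ⟨ha, hb⟩ ↦ ?_
        simp only [mem_ofPred_eq, add_mul, Finset.sum_add_distrib]
        linarith
    _ = gaussianReal 0 (‖w‖₊ ^ 2) (Ici (2 * t)) := by
        rw [← map_pi_gaussianReal_sum_mul, Measure.map_apply (by fun_prop) measurableSet_Ici]
        rfl
    _ = gaussianReal 0 1 (Ici (2 * t / ‖w‖)) :=
        gaussianReal_sq_apply_Ici (by simpa using (one_half_pos.trans_le hσ).ne') _
    _ ≤ gaussianReal 0 1 (Ici (2 * t)) + ENNReal.ofReal |‖w‖ - 1| := gaussianReal_Ici_div_le hσ _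
    _ ≤ ENNReal.ofReal (gaussTail (2 * t) + 2 / (n : ℝ) ^ 25) := by
        rw [gaussTail, ENNReal.ofReal_add ENNReal.toReal_nonneg (by positivity),
          ENNReal.ofReal_toReal (measure_ne_top _ _)]
        gcongr

theorem gaussian_correlation_bound
    (n : ℕ) (hn : 2 ≤ n) (ε : ℝ) (hε : ε = 1 / (n : ℝ) ^ 100) (t : ℝ)
    (ua ub uc : Fin n → ℝ)
    (hua : ∑ i, ua i ^ 2 = 1) (hub : ∑ i, ub i ^ 2 = 1) (huc : ∑ i, uc i ^ 2 = 1)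
    (hbal : ∑ i, (ua i + ub i + uc i) ^ 2 ≤ 18 * ε) :
    (MeasureTheory.Measure.pi fun _ : Fin n => ProbabilityTheory.gaussianReal 0 1)
        {g : Fin n → ℝ | t ≤ ∑ i, ua i * g i ∧ t ≤ ∑ i, ub i * g i} ≤
      ENNReal.ofReal (gaussTail (2 * t) + 2 / (n : ℝ) ^ 25) :=
  gaussian_correlation_bound_general n hn ε hε t ua ub uc huc hbal
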